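/- arXiv:2101.04239 — 8 statements merged into one kernel-verified Lean document; each statement's English description precedes it below -/
import Mathlib

section
/- If X is a finite cycle set with more than one element and there exists some x ∈ X such that φ_x is the identity map on X, then X is decomposable, i.e. the permutation group 𝒢(X) does not act transitively on X. -/
/-- A finite cycle set (given by its defining permutations `φ x`, where
`x · y = φ x y`) with more than one element such that some `φ x` is the
identity is decomposable, i.e. the group generated by the `φ x` does not act
transitively on `X`. -/
theorem stmt_1 {X : Type*} [Fintype X]
    (φ : X → Equiv.Perm X)
    (hcs : ∀ x y z : X, φ (φ x y) (φ x z) = φ (φ y x) (φ y z))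
    (hcard : 1 < Fintype.card X)
    (x : X) (hid : φ x = 1) :
    ¬ (∀ y z : X, ∃ g ∈ Subgroup.closure (Set.range φ), g y = z) := by
  intro htrans
  -- S is the set of elements with trivial permutation
  set S : Set X := {s | φ s = 1} with hS
  -- each φ y maps S into S
  have h1 : ∀ y s, φ s = 1 → φ (φ y s) = 1 := by
    intro y s hs
    ext w
    obtain ⟨z, rfl⟩ := (φ y).surjective w
    have := hcs s y z
    simp [hs] at this
    simpa using this.symm
  have hmaps : ∀ y, Set.MapsTo (φ y) S S := fun y s hs => h1 y s hs
  -- hence each φ y is a bijection of S, so inverses also preserve S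
  have hbij : ∀ y, Set.BijOn (φ y) S S := fun y =>
    (Set.Finite.injOn_iff_bijOn_of_mapsTo (Set.toFinite S) (hmaps y)).mp
      ((φ y).injective.injOn)
  have hinv : ∀ y s, s ∈ S → (φ y)⁻¹ s ∈ S := by
    intro y s hs
    obtain ⟨t, ht, hts⟩ := (hbij y).surjOn hs
    have : (φ y)⁻¹ s = t := by
      apply (φ y).injective; simp [hts]
    rwa [this]
  -- every element of the closure preserves S
  have hcl : ∀ g ∈ Subgroup.closure (Set.range φ), ∀ s ∈ S, g s ∈ S ∧ g⁻¹ s ∈ S := by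
    intro g hg
    induction hg using Subgroup.closure_induction with
    | mem g hg =>
        obtain ⟨y, rfl⟩ := hg
        exact fun s hs => ⟨hmaps y hs, hinv y s hs⟩
    | one => simp only [Equiv.Perm.coe_one, id_eq, inv_one]; exact fun s hs => ⟨hs, hs⟩
    | mul a b ha hb iha ihb =>
        intro s hs
        refine ⟨(iha (b s) (ihb s hs).1).1, ?_⟩
        have : (a * b)⁻¹ s = b⁻¹ (a⁻¹ s) := by simp
        rw [this]
        exact (ihb (a⁻¹ s) (iha s hs).2).2
    | inv a ha iha =>
        intro s hs
        exact ⟨(iha s hs).2, by simpa using (iha s hs).1⟩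
  -- case split: either all φ are trivial, or some z ∉ S
  by_cases hall : ∀ z : X, φ z = 1
  · obtain ⟨a, b, hab⟩ := Fintype.exists_pair_of_one_lt_card hcard
    obtain ⟨g, hg, hgab⟩ := htrans a b
    have hgx : ∀ w, g w = w := by
      intro w
      have : g ∈ Subgroup.closure ({1} : Set (Equiv.Perm X)) := by
        convert hg using 2
        ext p
        constructor
        · rintro rfl; exact ⟨x, hid⟩
        · rintro ⟨y, rfl⟩; exact hall y
      rw [Subgroup.closure_singleton_one, Subgroup.mem_bot] at this
      simp [this]
    exact hab (by rw [← hgab, hgx])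
  · push_neg at hall
    obtain ⟨z, hz⟩ := hall
    obtain ⟨g, hg, hgxz⟩ := htrans x z
    have : g x ∈ S := (hcl g hg x hid).1
    rw [hgxz] at this
    exact hz this
end

section
/- If X is an indecomposable finite cycle set with more than one element such that the permutation group 𝒢(X) is abelian, then X is retractable, i.e. there exist distinct elements x, y ∈ X with φ_x = φ_y. -/
/-!
Suppose `φ` is injective. A transitive abelian permutation group acts freely, so
`|𝒢(X)| ≤ |X|`, and the injection `x ↦ φ x` of `X` into `𝒢(X)` is onto; in particular
`φ e = 1` for some `e`. The cycle set identity at `x = e` reads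
`φ y z = φ (φ y e) (φ y z)`, so `φ (φ y e) = 1 = φ e` and hence `φ y e = e` for every `y`.
Then `e` is fixed by all of `𝒢(X)`, which is impossible for a transitive group on more than
one point.
-/

namespace Subgroup

variable {X : Type*} {G : Subgroup (Equiv.Perm X)}

theorem eq_one_of_apply_eq_self_of_commute (htrans : ∀ y z : X, ∃ g ∈ G, g y = z)
    (hab : ∀ g ∈ G, ∀ h ∈ G, g * h = h * g) {g : Equiv.Perm X} (hg : g ∈ G) {x : X}
    (hx : g x = x) : g = 1 := by
  ext y
  obtain ⟨h, hh, rfl⟩ := htrans x y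
  calc g (h x) = h (g x) := congrArg (· x) (hab g hg h hh)
    _ = h x := by rw [hx]

theorem injective_eval_of_commute (htrans : ∀ y z : X, ∃ g ∈ G, g y = z)
    (hab : ∀ g ∈ G, ∀ h ∈ G, g * h = h * g) (x : X) :
    Function.Injective (fun g : G => (g : Equiv.Perm X) x) := by
  intro g g' h
  have : (g' : Equiv.Perm X)⁻¹ * g = 1 :=
    eq_one_of_apply_eq_self_of_commute htrans hab (mul_mem (inv_mem g'.2) g.2) (x := x)
      (by simp [Equiv.Perm.inv_def, h])
  exact Subtype.ext (inv_mul_eq_one.mp this).symm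

end Subgroup

namespace CycleSet

variable {X : Type*} {φ : X → Equiv.Perm X}

theorem apply_eq_self_of_eq_one (hcs : ∀ x y z : X, φ (φ x y) (φ x z) = φ (φ y x) (φ y z))
    (hinj : Function.Injective φ) {e : X} (he : φ e = 1) (y : X) : φ y e = e := by
  have hφ : φ (φ y e) = 1 := by
    ext w
    simpa [he] using (hcs e y ((φ y)⁻¹ w)).symm
  exact hinj (hφ.trans he.symm)

theorem apply_eq_self_of_mem_closure {e : X} (he : ∀ y, φ y e = e) {g : Equiv.Perm X}
    (hg : g ∈ Subgroup.closure (Set.range φ)) : g e = e :=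
  (Subgroup.closure_le (K := MulAction.stabilizer (Equiv.Perm X) e)).mpr
    (by rintro _ ⟨y, rfl⟩; exact he y) hg

end CycleSet

/-- An indecomposable finite cycle set with more than one element whose
permutation group is abelian is retractable. -/
theorem stmt_3 {X : Type*} [Fintype X]
    (φ : X → Equiv.Perm X)
    (hcs : ∀ x y z : X, φ (φ x y) (φ x z) = φ (φ y x) (φ y z))
    (hcard : 1 < Fintype.card X)
    (htrans : ∀ y z : X, ∃ g ∈ Subgroup.closure (Set.range φ), g y = z)
    (hab : ∀ g ∈ Subgroup.closure (Set.range φ),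
      ∀ h ∈ Subgroup.closure (Set.range φ), g * h = h * g) :
    ∃ a b : X, a ≠ b ∧ φ a = φ b := by
  by_contra! hcon
  have hinj : Function.Injective φ := fun a b h => by_contra fun hne => hcon a b hne h
  set G := Subgroup.closure (Set.range φ)
  have hmem (x : X) : φ x ∈ G := Subgroup.subset_closure (Set.mem_range_self x)
  obtain ⟨x₀⟩ : Nonempty X := Fintype.card_pos_iff.mp (by omega)
  have hφG_inj : Function.Injective (fun x => (⟨φ x, hmem x⟩ : G)) :=
    fun _ _ h => hinj (congrArg Subtype.val h)
  have hφG : Function.Bijective (fun x => (⟨φ x, hmem x⟩ : G)) :=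
    hφG_inj.bijective_of_nat_card_le
      (Nat.card_le_card_of_injective _ (Subgroup.injective_eval_of_commute htrans hab x₀))
  obtain ⟨e, he⟩ := hφG.2 1
  have hfix : ∀ g ∈ G, g e = e := fun _ =>
    CycleSet.apply_eq_self_of_mem_closure
      (CycleSet.apply_eq_self_of_eq_one hcs hinj (congrArg Subtype.val he))
  obtain ⟨z, hz⟩ := Fintype.exists_ne_of_one_lt_card hcard e
  obtain ⟨g, hg, rfl⟩ := htrans e z
  exact hz (hfix g hg)
end

section
/- Let X be a finite cycle set of size n. If the diagonal map T : X → X, T(x) = x·x, is a cycle of length n (i.e. T is a cyclic permutation moving all n elements of X), then X is indecomposable, i.e. the permutation group 𝒢(X) acts transitively on X. -/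
/-- A finite cycle set of size `n` whose diagonal `T : x ↦ x · x` is a cycle
of length `n` is indecomposable. -/
theorem stmt_4 {X : Type*} [Fintype X] [DecidableEq X]
    (φ : X → Equiv.Perm X)
    (hcs : ∀ x y z : X, φ (φ x y) (φ x z) = φ (φ y x) (φ y z))
    (T : Equiv.Perm X) (hT : ∀ x : X, T x = φ x x)
    (hcyc : T.IsCycle) (hlen : T.support.card = Fintype.card X) :
    ∀ y z : X, ∃ g ∈ Subgroup.closure (Set.range φ), g y = z := by
  have hsupp : T.support = Finset.univ := Finset.eq_univ_of_card _ hlen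
  have hmove : ∀ x : X, T x ≠ x := fun x =>
    Equiv.Perm.mem_support.mp (hsupp ▸ Finset.mem_univ x)
  -- every T-power image is reachable
  have key : ∀ (k : ℕ) (y : X), ∃ g ∈ Subgroup.closure (Set.range φ), g y = (T ^ k) y := by
    intro k
    induction k with
    | zero => intro y; exact ⟨1, one_mem _, rfl⟩
    | succ n ih =>
      intro y
      obtain ⟨g, hg, hgy⟩ := ih y
      refine ⟨φ ((T ^ n) y) * g, mul_mem (Subgroup.subset_closure ⟨_, rfl⟩) hg, ?_⟩
      simp only [Equiv.Perm.mul_apply, hgy]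
      rw [← hT, pow_succ', Equiv.Perm.mul_apply]
  intro y z
  obtain ⟨k, hk⟩ := hcyc.exists_pow_eq (hmove y) (hmove z)
  obtain ⟨g, hg, hgy⟩ := key k y
  exact ⟨g, hg, hgy.trans hk⟩
end

section
/- Let (X,r) be a solution with diagonal T, and let x ∈ X be such that T(x) = x. Then T(τ_y(x)) = τ_{σ_x(y)}(x) for all y ∈ X. -/
/-- The map `r × id` on `X × X × X`. -/
def r12 {X : Type*} (r : X × X → X × X) : X × X × X → X × X × X :=
  fun p => ((r (p.1, p.2.1)).1, (r (p.1, p.2.1)).2, p.2.2)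

/-- The map `id × r` on `X × X × X`. -/
def r23 {X : Type*} (r : X × X → X × X) : X × X × X → X × X × X :=
  fun p => (p.1, r p.2)

/-- The braid relation `(r × id) ∘ (id × r) ∘ (r × id) = (id × r) ∘ (r × id) ∘ (id × r)`. -/
def YangBaxter {X : Type*} (r : X × X → X × X) : Prop :=
  r12 r ∘ r23 r ∘ r12 r = r23 r ∘ r12 r ∘ r23 r

/-- Let `(X, r)`, `r (x, y) = (σ x y, τ y x)`, be a (non-degenerate involutive)
solution with diagonal `T : x ↦ (τ x)⁻¹ x`. If `T x = x`, then
`T (τ y x) = τ (σ x y) x` for all `y`. -/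
theorem stmt_6 {X : Type*} (σ τ : X → Equiv.Perm X)
    (hinv : Function.Involutive (fun p : X × X => (σ p.1 p.2, τ p.2 p.1)))
    (hYB : YangBaxter (fun p : X × X => (σ p.1 p.2, τ p.2 p.1)))
    (x : X) (hx : (τ x)⁻¹ x = x) :
    ∀ y : X, (τ (τ y x))⁻¹ (τ y x) = τ (σ x y) x := by
  intro y
  have hxx : τ x x = x := by
    have h := congrArg (τ x) hx
    simpa using h.symm
  have h := congrFun hYB (x, x, y)
  simp only [YangBaxter, r12, r23, Function.comp_apply] at h
  have h3 := congrArg (fun p : X × X × X => p.2.2) h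
  simp only [hxx] at h3
  -- h3 : τ y x = τ (τ y x) (τ (σ x y) x)
  have : (τ (τ y x)).symm (τ y x) = τ (σ x y) x := by
    rw [Equiv.symm_apply_eq]
    exact h3
  simpa [Equiv.Perm.inv_def] using this
end

section
/- If (X,r) is a square-free solution, i.e. r(x,x) = (x,x) for all x ∈ X, then τ_x = σ_x⁻¹ for all x ∈ X. -/
/-- In a square-free (non-degenerate involutive) solution `(X, r)`,
`r (x, y) = (σ x y, τ y x)`, one has `τ x = (σ x)⁻¹` for all `x`. -/
theorem stmt_7 {X : Type*} (σ τ : X → Equiv.Perm X)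
    (hinv : Function.Involutive (fun p : X × X => (σ p.1 p.2, τ p.2 p.1)))
    (hYB : YangBaxter (fun p : X × X => (σ p.1 p.2, τ p.2 p.1)))
    (hsf : ∀ x : X, σ x x = x ∧ τ x x = x) :
    ∀ x : X, τ x = (σ x)⁻¹ := by
  -- Key identity: σ (τ y x) y = σ x y, from YB applied to (x, y, y).
  have star : ∀ x y : X, σ (τ y x) y = σ x y := by
    intro x y
    have h := congrFun hYB (x, y, y)
    simp only [YangBaxter, r12, r23, Function.comp_apply, (hsf y).1, (hsf y).2] at h
    have h1 : σ (σ x y) (σ (τ y x) y) = σ x y := congrArg Prod.fst h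
    have h2 : σ (σ x y) (σ x y) = σ x y := (hsf (σ x y)).1
    exact (σ (σ x y)).injective (h1.trans h2.symm)
  -- From involutivity: τ (τ y x) (σ x y) = y.
  have hinv2 : ∀ x y : X, τ (τ y x) (σ x y) = y := by
    intro x y
    have h := hinv (x, y)
    exact congrArg Prod.snd h
  -- Hence τ a (σ a y) = y for all a, y.
  have key : ∀ a y : X, τ a (σ a y) = y := by
    intro a y
    have := hinv2 ((τ y).symm a) y
    rwa [Equiv.apply_symm_apply, ← star ((τ y).symm a) y, Equiv.apply_symm_apply] at this
  intro x
  ext y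
  have := key x ((σ x).symm y)
  rw [Equiv.apply_symm_apply] at this
  simpa using this
end

section
/- Let (X,r) be a solution. Then the map T : X → X, T(x) = τ_x⁻¹(x), is bijective with inverse given by x ↦ σ_x⁻¹(x), and τ_x⁻¹ ∘ T = T ∘ σ_x holds for all x ∈ X. -/
/-- For a (non-degenerate involutive) solution `(X, r)`,
`r (x, y) = (σ x y, τ y x)`, the map `T : x ↦ (τ x)⁻¹ x` is bijective with
inverse `x ↦ (σ x)⁻¹ x`, and `(τ x)⁻¹ ∘ T = T ∘ σ x` for all `x`. -/
theorem stmt_15 {X : Type*} (σ τ : X → Equiv.Perm X)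
    (hinv : Function.Involutive (fun p : X × X => (σ p.1 p.2, τ p.2 p.1)))
    (hYB : YangBaxter (fun p : X × X => (σ p.1 p.2, τ p.2 p.1))) :
    Function.Bijective (fun x : X => (τ x)⁻¹ x) ∧
    Function.LeftInverse (fun x : X => (σ x)⁻¹ x) (fun x : X => (τ x)⁻¹ x) ∧
    Function.RightInverse (fun x : X => (σ x)⁻¹ x) (fun x : X => (τ x)⁻¹ x) ∧
    ∀ x : X, (⇑(τ x)⁻¹ ∘ fun y : X => (τ y)⁻¹ y) = ((fun y : X => (τ y)⁻¹ y) ∘ ⇑(σ x)) := by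
  -- components of involutivity
  have hσ : ∀ x y : X, σ (σ x y) (τ y x) = x := by
    intro x y
    have := hinv (x, y)
    exact congrArg Prod.fst this
  have hτ : ∀ x y : X, τ (τ y x) (σ x y) = y := by
    intro x y
    have := hinv (x, y)
    exact congrArg Prod.snd this
  -- third-coordinate component of the Yang–Baxter relation
  have hC : ∀ a b c : X, τ c (τ b a) = τ (τ c b) (τ (σ b c) a) := by
    intro a b c
    have := congrFun hYB (a, b, c)
    simp only [r12, r23, Function.comp] at this
    exact congrArg (fun p : X × X × X => p.2.2) this
  have hL : Function.LeftInverse (fun x : X => (σ x)⁻¹ x) (fun x : X => (τ x)⁻¹ x) := by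
    intro x
    set a := (τ x)⁻¹ x with ha
    have hxa : τ x a = x := by simp [ha]
    have h1 : τ (τ x a) (σ a x) = x := hτ a x
    rw [hxa] at h1
    have h2 : σ a x = a := by
      have := congrArg (fun z => (τ x)⁻¹ z) h1
      simpa [ha] using this
    simp only []
    calc (σ a)⁻¹ a = (σ a)⁻¹ (σ a x) := by rw [h2]
    _ = x := by simp
  have hR : Function.RightInverse (fun x : X => (σ x)⁻¹ x) (fun x : X => (τ x)⁻¹ x) := by
    intro x
    set b := (σ x)⁻¹ x with hb
    have hxb : σ x b = x := by simp [hb]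
    have h1 : σ (σ x b) (τ b x) = x := hσ x b
    rw [hxb] at h1
    have h2 : τ b x = b := by
      have := congrArg (fun z => (σ x)⁻¹ z) h1
      simpa [hb] using this
    simp only []
    calc (τ b)⁻¹ b = (τ b)⁻¹ (τ b x) := by rw [h2]
    _ = x := by simp
  refine ⟨⟨hL.injective, hR.surjective⟩, hL, hR, ?_⟩
  intro x
  funext y
  simp only [Function.comp]
  set u := σ x y with hu
  set w := τ y x with hw
  have h1 : τ w u = y := hτ x y
  have h2 : σ u w = x := hσ x y
  have h3 := hC ((τ u)⁻¹ u) u w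
  rw [show τ u ((τ u)⁻¹ u) = u by simp, h1, h2] at h3
  -- h3 : y = τ y (τ x ((τ u)⁻¹ u))
  have := congrArg (fun z => (τ x)⁻¹ ((τ y)⁻¹ z)) h3
  simpa using this
end

section
/- Let (X,r) be a solution with diagonal T. Then the subgroup of the symmetric group of X generated by {σ_x : x ∈ X} is the conjugate by T⁻¹ of the subgroup generated by {τ_x : x ∈ X}; more precisely, σ_x = T⁻¹ ∘ τ_x⁻¹ ∘ T for all x ∈ X, and hence ⟨σ_x : x ∈ X⟩ = T⁻¹·⟨τ_x : x ∈ X⟩·T. In particular the two subgroups are isomorphic as permutation groups on X. -/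
/-- For a (non-degenerate involutive) solution `(X, r)`,
`r (x, y) = (σ x y, τ y x)`, with diagonal `T : x ↦ (τ x)⁻¹ x`, one has
`σ x = T⁻¹ ∘ (τ x)⁻¹ ∘ T` for all `x`, and the group generated by the `σ x`
is the conjugate by `T⁻¹` of the group generated by the `τ x`. -/
theorem stmt_16 {X : Type*} (σ τ : X → Equiv.Perm X)
    (hinv : Function.Involutive (fun p : X × X => (σ p.1 p.2, τ p.2 p.1)))
    (hYB : YangBaxter (fun p : X × X => (σ p.1 p.2, τ p.2 p.1)))
    (T : Equiv.Perm X) (hT : ∀ x : X, T x = (τ x)⁻¹ x) :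
    (∀ x : X, σ x = T⁻¹ * (τ x)⁻¹ * T) ∧
    Subgroup.closure (Set.range σ) =
      Subgroup.map (MulAut.conj T⁻¹).toMonoidHom (Subgroup.closure (Set.range τ)) := by
  -- third component of the Yang–Baxter relation
  have hC : ∀ x y z : X, τ z (τ y x) = τ (τ z y) (τ (σ y z) x) := by
    intro x y z
    have h := congrFun hYB (x, y, z)
    simp only [YangBaxter, r12, r23, Function.comp_apply, Prod.mk.injEq] at h
    exact h.2.2
  -- involutivity, componentwise
  have hσi : ∀ x y : X, σ (σ x y) (τ y x) = x := by
    intro x y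
    have h := hinv (x, y)
    simp only [Prod.mk.injEq] at h
    exact h.1
  have hτi : ∀ x y : X, τ (τ y x) (σ x y) = y := by
    intro x y
    have h := hinv (x, y)
    simp only [Prod.mk.injEq] at h
    exact h.2
  have key : ∀ x : X, σ x = T⁻¹ * (τ x)⁻¹ * T := by
    intro x
    ext y
    set u := σ x y with hu
    set v := τ y x with hv
    -- hC at (a, u, v): τ v (τ u a) = τ (τ v u) (τ (σ u v) a) = τ y (τ x a)
    have hcomm : ∀ a : X, τ v (τ u a) = τ y (τ x a) := by
      intro a
      have := hC a u v
      rwa [hτi x y, hσi x y] at this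
    have h1 : τ v (τ u ((τ u)⁻¹ u)) = τ y (τ x ((τ u)⁻¹ u)) := hcomm _
    have h2 : τ v u = y := hτi x y
    have h3 : τ x (T u) = T y := by
      apply (τ y).injective
      rw [hT u, hT y, ← h1]
      simp [h2]
    -- goal: σ x y = (T⁻¹ * (τ x)⁻¹ * T) y
    simp only [Equiv.Perm.mul_apply]
    rw [← h3]
    simp
  refine ⟨key, ?_⟩
  have hset : Set.range σ = (MulAut.conj T⁻¹).toMonoidHom '' (Set.range τ)⁻¹ := by
    ext g
    simp only [Set.mem_range, Set.mem_image, Set.mem_inv, MulEquiv.coe_toMonoidHom,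
      MulAut.conj_apply, inv_inv]
    constructor
    · rintro ⟨x, rfl⟩
      exact ⟨(τ x)⁻¹, ⟨x, by rw [inv_inv]⟩, (key x).symm⟩
    · rintro ⟨h, ⟨x, hx⟩, rfl⟩
      exact ⟨x, by rw [key x, hx, inv_inv]⟩
  rw [hset, ← MonoidHom.map_closure, Subgroup.closure_inv]
end

section
/- (Rump's correspondence, one direction) Let (X,·) be a non-degenerate cycle set, and for y, x ∈ X define y * x = φ_y⁻¹(x) (so that x = y·z if and only if z = y * x). Define r : X × X → X × X by r(x,y) = ((y * x)·y, y * x). Then (X,r) is a solution: r is bijective, r ∘ r = id, r satisfies the braid relation (r × id) ∘ (id × r) ∘ (r × id) = (id × r) ∘ (r × id) ∘ (id × r), and writing r(x,y) = (σ_x(y), τ_y(x)), all the maps σ_x and τ_y are bijective. -/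
/-!
The key identity is the cycle law at `z = y`: writing `T x = x · x`, it reads
`T (x · y) = (y · x) · T y`, i.e. `T (σ_x y) = x · T y`. Hence `σ_x` is conjugate under the
bijection `T` to the bijection `φ_x`. Involutivity is immediate from `y * x = φ_y⁻¹ x`, and the
braid relation reduces, after writing the arguments in the form `(z · c) · (z · d), z · c, z`,
to three instances of the cycle law.
-/

namespace CycleSet

variable {X : Type*} (φ : X → Equiv.Perm X)

def IsCycleSet : Prop :=
  ∀ x y z : X, φ (φ x y) (φ x z) = φ (φ y x) (φ y z)

def solution (p : X × X) : X × X :=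
  (φ ((φ p.2)⁻¹ p.1) p.2, (φ p.2)⁻¹ p.1)

theorem solution_involutive : Function.Involutive (solution φ) := by
  rintro ⟨x, y⟩
  simp [solution]

variable {φ}

theorem solution_yangBaxter (hcs : IsCycleSet φ) : YangBaxter (solution φ) := by
  funext ⟨x, y, z⟩
  obtain ⟨c, rfl⟩ : ∃ c, φ z c = y := ⟨(φ z)⁻¹ y, by simp⟩
  obtain ⟨d, rfl⟩ : ∃ d, φ (φ z c) (φ z d) = x := ⟨(φ z)⁻¹ ((φ (φ z c))⁻¹ x), by simp⟩
  simp only [r12, r23, solution, Function.comp_apply, Equiv.Perm.coe_inv,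
    Equiv.symm_apply_apply]
  rw [hcs z d c, hcs z c d]
  simp only [Equiv.symm_apply_apply]
  rw [hcs d c z]

theorem square_solution_fst (hcs : IsCycleSet φ) (x y : X) :
    φ (solution φ (x, y)).1 (solution φ (x, y)).1 = φ x (φ y y) := by
  simp only [solution, hcs _ y y, Equiv.Perm.coe_inv, Equiv.apply_symm_apply]

theorem solution_fst_bijective (hcs : IsCycleSet φ)
    (hnd : Function.Bijective (fun x : X => φ x x)) (x : X) :
    Function.Bijective (fun y : X => (solution φ (x, y)).1) := by
  rw [← hnd.of_comp_iff']
  have hconj : (fun x : X => φ x x) ∘ (fun y => (solution φ (x, y)).1) =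
      φ x ∘ (fun y : X => φ y y) :=
    funext (square_solution_fst hcs x)
  rw [hconj]
  exact (φ x).bijective.comp hnd

theorem solution_snd_bijective (y : X) :
    Function.Bijective (fun x : X => (solution φ (x, y)).2) :=
  (φ y)⁻¹.bijective

end CycleSet

open CycleSet in
/-- (Rump's correspondence) Let `X` be a non-degenerate cycle set with
`x · y = φ x y` and set `y * x = (φ y)⁻¹ x`. Then
`r (x, y) = ((y * x) · y, y * x)` is a non-degenerate involutive
set-theoretic solution to the Yang–Baxter equation. -/
theorem stmt_17 {X : Type*} (φ : X → Equiv.Perm X)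
    (hcs : ∀ x y z : X, φ (φ x y) (φ x z) = φ (φ y x) (φ y z))
    (hnd : Function.Bijective (fun x : X => φ x x))
    (r : X × X → X × X)
    (hr : ∀ x y : X, r (x, y) = (φ ((φ y)⁻¹ x) y, (φ y)⁻¹ x)) :
    Function.Bijective r ∧
    Function.Involutive r ∧
    YangBaxter r ∧
    (∀ x : X, Function.Bijective (fun y : X => (r (x, y)).1)) ∧
    (∀ y : X, Function.Bijective (fun x : X => (r (x, y)).2)) := by
  obtain rfl : r = solution φ := funext fun ⟨x, y⟩ => hr x y
  exact ⟨(solution_involutive φ).bijective, solution_involutive φ, solution_yangBaxter hcs,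
    solution_fst_bijective hcs hnd, solution_snd_bijective⟩
end
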